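/- For every κ > 0 and every real-valued smooth 1-periodic function q on ℝ, one has ∬_{[0,1)×[0,1)} q(x) G_κ(x,y)² q(y) dx dy = (2e^{−κ}/(1−e^{−κ})²) · |q̂(0)|²/(4κ²) + ((1−e^{−2κ})/(κ(1−e^{−κ})²)) Σ_{ξ∈2πℤ} |q̂(ξ)|²/(ξ²+4κ²), where G_κ(x,y) = (1/(2κ))(1−e^{−κ})^{-1} [ e^{−κ δ(x,y)} + e^{−κ+κ δ(x,y)} ] and δ(x,y) = dist(x−y, ℤ). -/

import Mathlib

open MeasureTheory Complex Real

/-- Fourier coefficients on the circle: `q̂(ξ) = ∫₀¹ e^{-iξx} q(x) dx` for `ξ ∈ 2πℤ`. -/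
noncomputable def FC (f : ℝ → ℝ) (ξ : ℝ) : ℂ :=
  ∫ x in (0:ℝ)..1, Complex.exp (-(Complex.I * ξ * x)) * f x

/-- Distance to the nearest integer. -/
noncomputable def distZ (x : ℝ) : ℝ := |x - round x|

/-- The kernel of the free resolvent `(-∂ₓ² + κ²)⁻¹` on `L²(ℝ/ℤ)`. -/
noncomputable def Gcirc (κ x y : ℝ) : ℝ :=
  (1 / (2 * κ)) * (1 - Real.exp (-κ))⁻¹ *
    (Real.exp (-κ * distZ (x - y)) + Real.exp (-κ + κ * distZ (x - y)))

/-!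
Squaring the kernel gives `G_κ(x, y)² = (2κ (1 - e^{-κ}))⁻² (E_{2κ}(x - y) + 2 e^{-κ})`, where
`E_λ(t) = e^{-λ δ(t)} + e^{-λ + λ δ(t)}`. On `[0, 1]` this is `e^{-λt} + e^{-λ} e^{λt}`, whose
Fourier coefficients `2λ (1 - e^{-λ}) / ((2πn)² + λ²)` are summable, so the Fourier series of
`G_κ(·, 0)²` converges pointwise. Substituting it into the double integral and exchanging sum
and integrals (dominated convergence, with constant bounds since `q` is bounded) turns the
quadratic form into `∑ₙ cₙ |q̂(2πn)|²`.
-/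

theorem distZ_eq_norm_coe (x : ℝ) : distZ x = ‖(x : UnitAddCircle)‖ :=
  UnitAddCircle.norm_eq.symm

theorem distZ_of_abs_le {x : ℝ} (hx : |x| ≤ 1 / 2) : distZ x = |x| := by
  rw [distZ_eq_norm_coe, AddCircle.norm_coe_eq_abs_iff (p := (1 : ℝ)) one_ne_zero]
  simpa using hx

theorem distZ_sub_one (x : ℝ) : distZ (x - 1) = distZ x := by
  rw [distZ_eq_norm_coe, distZ_eq_norm_coe, AddCircle.coe_sub, AddCircle.coe_period, sub_zero]

noncomputable def expKernel (κ t : ℝ) : ℝ :=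
  Real.exp (-κ * distZ t) + Real.exp (-κ + κ * distZ t)

theorem Gcirc_eq_expKernel (κ x y : ℝ) :
    Gcirc κ x y = (1 / (2 * κ)) * (1 - Real.exp (-κ))⁻¹ * expKernel κ (x - y) := rfl

theorem expKernel_sq (κ t : ℝ) : expKernel κ t ^ 2 = expKernel (2 * κ) t + 2 * Real.exp (-κ) := by
  simp only [expKernel, add_sq, ← Real.exp_nat_mul, mul_assoc, ← Real.exp_add]
  ring_nf

theorem expKernel_of_mem_Icc (κ : ℝ) {t : ℝ} (ht : t ∈ Set.Icc (0 : ℝ) 1) :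
    expKernel κ t = Real.exp (-κ * t) + Real.exp (-κ) * Real.exp (κ * t) := by
  rw [← Real.exp_add]
  rcases le_total t (1 / 2) with h | h
  · rw [expKernel, distZ_of_abs_le (by rw [abs_of_nonneg ht.1]; exact h), abs_of_nonneg ht.1]
  · have hneg : t - 1 ≤ 0 := by linarith [ht.2]
    rw [expKernel, ← distZ_sub_one, distZ_of_abs_le (by rw [abs_of_nonpos hneg]; linarith),
      abs_of_nonpos hneg, add_comm]
    ring_nf

theorem integral_exp_two_pi_int_add (n : ℤ) {a : ℂ} (h : 2 * π * I * n + a ≠ 0) :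
    ∫ t in (0 : ℝ)..1, Complex.exp ((2 * π * I * n + a) * t) =
      (Complex.exp a - 1) / (2 * π * I * n + a) := by
  have hn : Complex.exp (2 * π * I * n) = 1 := by
    rw [← Complex.exp_int_mul_two_pi_mul_I n]; ring_nf
  rw [integral_exp_mul_complex h]
  simp [Complex.exp_add, hn]

noncomputable def expKernelCoeff (κ : ℝ) (n : ℤ) : ℝ :=
  2 * κ * (1 - Real.exp (-κ)) / ((2 * π * n) ^ 2 + κ ^ 2)

theorem summable_expKernelCoeff (κ : ℝ) : Summable (expKernelCoeff κ) := by
  refine Summable.of_norm_bounded_eventually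
    (g := fun n : ℤ => |2 * κ * (1 - Real.exp (-κ))| / (4 * π ^ 2) * (1 / (n : ℝ) ^ 2))
    ((Real.summable_one_div_int_pow.mpr one_lt_two).mul_left _) ?_
  filter_upwards [Filter.eventually_cofinite_ne 0] with n hn
  have hn2 : (1 : ℝ) ≤ (n : ℝ) ^ 2 := by
    rw [← Int.cast_pow, ← Int.cast_one, Int.cast_le]
    nlinarith [Int.one_le_abs hn, sq_abs n]
  rw [expKernelCoeff, norm_div, Real.norm_eq_abs, Real.norm_of_nonneg (by positivity),
    div_mul_div_comm, mul_one]
  gcongr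
  nlinarith [sq_nonneg κ, Real.pi_pos]

theorem expKernelCoeff_eq_div_add_div {κ : ℝ} (hκ : κ ≠ 0) (n : ℤ) :
    (expKernelCoeff κ n : ℂ) = (Complex.exp (-κ) - 1) / (-(2 * π * I * n) - κ) +
      Complex.exp (-κ) * ((Complex.exp κ - 1) / (-(2 * π * I * n) + κ)) := by
  have hw (a : ℝ) (ha : a ≠ 0) : -(2 * π * I * n) + a ≠ 0 := fun h =>
    ha (by simpa using congrArg Complex.re h)
  have h₁ : -(2 * π * I * n) - κ ≠ 0 := by simpa [sub_eq_add_neg] using hw _ (neg_ne_zero.mpr hκ)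
  have hden : ((2 * π * n) ^ 2 + κ ^ 2 : ℂ) ≠ 0 := by
    exact_mod_cast (by positivity : (0 : ℝ) < (2 * π * n) ^ 2 + κ ^ 2).ne'
  have hexp : Complex.exp (-κ) * Complex.exp κ = 1 := by rw [← Complex.exp_add]; simp
  rw [expKernelCoeff]
  push_cast
  rw [mul_div_assoc', div_add_div _ _ h₁ (hw _ hκ), eq_div_iff (mul_ne_zero h₁ (hw _ hκ)),
    div_mul_eq_mul_div, div_eq_iff hden]
  linear_combination
    (4 * κ * π ^ 2 * n ^ 2 + 2 * κ ^ 2 * π * I * n + κ ^ 3 + 8 * π ^ 3 * I * n ^ 3) * hexp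
      - 8 * κ * π ^ 2 * n ^ 2 * (Complex.exp (-κ) - 1) * I_sq

theorem integral_exp_mul_expKernel {κ : ℝ} (hκ : κ ≠ 0) (n : ℤ) :
    ∫ t in (0 : ℝ)..1, Complex.exp (2 * π * I * (-n : ℤ) * t) * expKernel κ t =
      expKernelCoeff κ n := by
  set w : ℂ := 2 * π * I * (-n : ℤ)
  have hw (a : ℝ) (ha : a ≠ 0) : w + a ≠ 0 := fun h =>
    ha (by simpa [w] using congrArg Complex.re h)
  have hsplit : ∀ t ∈ Set.uIcc (0 : ℝ) 1, Complex.exp (w * t) * expKernel κ t =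
      Complex.exp ((w + (-κ : ℝ)) * t) + Complex.exp (-κ) * Complex.exp ((w + κ) * t) := by
    intro t ht
    rw [Set.uIcc_of_le zero_le_one] at ht
    rw [expKernel_of_mem_Icc κ ht]
    push_cast
    simp only [mul_add, ← Complex.exp_add]
    ring_nf
  rw [intervalIntegral.integral_congr hsplit, intervalIntegral.integral_add
    (Continuous.intervalIntegrable (by fun_prop) _ _)
    (Continuous.intervalIntegrable (by fun_prop) _ _),
    intervalIntegral.integral_const_mul, integral_exp_two_pi_int_add _ (hw _ (neg_ne_zero.mpr hκ)),
    integral_exp_two_pi_int_add _ (hw _ hκ), expKernelCoeff_eq_div_add_div hκ]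
  push_cast
  ring

theorem hasSum_expKernel {κ : ℝ} (hκ : κ ≠ 0) (t : ℝ) :
    HasSum (fun n : ℤ => (expKernelCoeff κ n : ℂ) * Complex.exp (2 * π * I * n * t))
      (expKernel κ t) := by
  let f : C(UnitAddCircle, ℂ) :=
    ⟨fun z => ((Real.exp (-κ * ‖z‖) + Real.exp (-κ + κ * ‖z‖) : ℝ) : ℂ), by fun_prop⟩
  have hf (x : ℝ) : f x = expKernel κ x := by simp [f, expKernel, distZ_eq_norm_coe]
  have hcoeff (n : ℤ) : fourierCoeff f n = expKernelCoeff κ n := by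
    rw [fourierCoeff_eq_intervalIntegral _ n 0, ← integral_exp_mul_expKernel hκ n]
    simp only [fourier_coe_apply, hf, smul_eq_mul, Complex.ofReal_one, div_one, one_smul, zero_add]
  have hsum : Summable (fourierCoeff f) := by
    rw [funext hcoeff]
    exact Complex.summable_ofReal.mpr (summable_expKernelCoeff κ)
  simpa [hcoeff, hf, fourier_coe_apply] using has_pointwise_sum_fourier_series_of_summable hsum t

theorem hasSum_integral_of_norm_le_summable {ι α E : Type*} [Countable ι] [MeasurableSpace α]
    [NormedAddCommGroup E] [NormedSpace ℝ E] {μ : Measure α} [IsFiniteMeasure μ]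
    {F : ι → α → E} {f : α → E} {b : ι → ℝ} (hF : ∀ n, AEStronglyMeasurable (F n) μ)
    (hb : ∀ n, ∀ᵐ x ∂μ, ‖F n x‖ ≤ b n) (hsum : Summable b)
    (hf : ∀ᵐ x ∂μ, HasSum (fun n => F n x) (f x)) :
    HasSum (fun n => ∫ x, F n x ∂μ) (∫ x, f x ∂μ) :=
  hasSum_integral_of_dominated_convergence (fun n _ => b n) hF hb (ae_of_all _ fun _ => hsum)
    (integrable_const _) hf

theorem FC_eq_setIntegral (q : ℝ → ℝ) (ξ : ℝ) :
    FC q ξ = ∫ y in Set.Ico (0 : ℝ) 1, Complex.exp (-(I * ξ * y)) * q y := by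
  rw [FC, intervalIntegral.integral_of_le zero_le_one]
  exact (setIntegral_congr_set Ico_ae_eq_Ioc).symm

theorem conj_FC (q : ℝ → ℝ) (ξ : ℝ) :
    starRingEnd ℂ (FC q ξ) = ∫ x in Set.Ico (0 : ℝ) 1, Complex.exp (I * ξ * x) * q x := by
  rw [FC_eq_setIntegral, ← integral_conj]
  congr 1 with x
  simp [← Complex.exp_conj]

theorem norm_FC_le {q : ℝ → ℝ} {M : ℝ} (hM : ∀ y ∈ Set.Icc (0 : ℝ) 1, |q y| ≤ M) (ξ : ℝ) :
    ‖FC q ξ‖ ≤ M := by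
  rw [FC]
  simpa using intervalIntegral.norm_integral_le_of_norm_le_const (a := 0) (b := 1)
    (f := fun y => Complex.exp (-(I * ξ * y)) * q y) fun y hy => by
      rw [Set.uIoc_of_le zero_le_one] at hy
      simpa [Complex.norm_exp] using hM y (Set.Ioc_subset_Icc_self hy)

section KernelBilinearForm

variable {H : ℝ → ℝ} {c : ℤ → ℝ} {q : ℝ → ℝ} {M : ℝ}

theorem hasSum_integral_kernel_mul (hc : Summable c)
    (hH : ∀ t : ℝ, HasSum (fun n : ℤ => (c n : ℂ) * Complex.exp (2 * π * I * n * t)) (H t))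
    (hq : Continuous q) (hM : ∀ y ∈ Set.Icc (0 : ℝ) 1, |q y| ≤ M) (x : ℝ) :
    HasSum (fun n => (c n : ℂ) * Complex.exp (2 * π * I * n * x) * FC q (2 * π * n))
      (∫ y in Set.Ico (0 : ℝ) 1, (H (x - y) : ℂ) * q y) := by
  have hterm (n : ℤ) : ∫ y in Set.Ico (0 : ℝ) 1,
      (c n : ℂ) * Complex.exp (2 * π * I * n * (x - y : ℝ)) * q y =
        c n * Complex.exp (2 * π * I * n * x) * FC q (2 * π * n) := by
    rw [FC_eq_setIntegral, ← integral_const_mul]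
    congr 1 with y
    have hexp : Complex.exp (2 * π * I * n * (x - y : ℝ)) =
        Complex.exp (2 * π * I * n * x) * Complex.exp (-(I * (2 * π * n : ℝ) * y)) := by
      rw [← Complex.exp_add]; push_cast; ring_nf
    rw [hexp]; ring
  rw [← funext hterm]
  refine hasSum_integral_of_norm_le_summable (b := fun n => |c n| * M)
    (fun n => Continuous.aestronglyMeasurable (by fun_prop)) (fun n => ?_) (hc.abs.mul_right M)
    (ae_of_all _ fun y => (hH (x - y)).mul_right _)
  filter_upwards [ae_restrict_mem measurableSet_Ico] with y hy
  simpa [Complex.norm_exp] using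
    mul_le_mul_of_nonneg_left (hM y (Set.Ico_subset_Icc_self hy)) (abs_nonneg (c n))

theorem hasSum_integral_mul_integral_kernel_mul (hc : Summable c)
    (hH : ∀ t : ℝ, HasSum (fun n : ℤ => (c n : ℂ) * Complex.exp (2 * π * I * n * t)) (H t))
    (hq : Continuous q) (hM : ∀ y ∈ Set.Icc (0 : ℝ) 1, |q y| ≤ M) :
    HasSum (fun n => ((c n * ‖FC q (2 * π * n)‖ ^ 2 : ℝ) : ℂ))
      (∫ x in Set.Ico (0 : ℝ) 1, (q x : ℂ) * ∫ y in Set.Ico (0 : ℝ) 1, (H (x - y) : ℂ) * q y) := by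
  have hterm (n : ℤ) : ∫ x in Set.Ico (0 : ℝ) 1,
      (q x : ℂ) * ((c n : ℂ) * Complex.exp (2 * π * I * n * x) * FC q (2 * π * n)) =
        ((c n * ‖FC q (2 * π * n)‖ ^ 2 : ℝ) : ℂ) := by
    have hsplit (x : ℝ) :
        (q x : ℂ) * ((c n : ℂ) * Complex.exp (2 * π * I * n * x) * FC q (2 * π * n)) =
          (c n * FC q (2 * π * n)) * (Complex.exp (I * (2 * π * n : ℝ) * x) * q x) := by
      push_cast; ring_nf
    simp_rw [hsplit]
    rw [integral_const_mul, ← conj_FC, mul_assoc, Complex.mul_conj, Complex.normSq_eq_norm_sq]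
    push_cast; ring
  rw [← funext hterm]
  refine hasSum_integral_of_norm_le_summable (b := fun n => M * (|c n| * M))
    (fun n => Continuous.aestronglyMeasurable (by fun_prop)) (fun n => ?_)
    ((hc.abs.mul_right M).mul_left M)
    (ae_of_all _ fun x => (hasSum_integral_kernel_mul hc hH hq hM x).mul_left _)
  filter_upwards [ae_restrict_mem measurableSet_Ico] with x hx
  have hFC := norm_FC_le hM (2 * π * n)
  have hexp : ‖Complex.exp (2 * π * I * n * x)‖ = 1 := by simp [Complex.norm_exp]
  rw [norm_mul, norm_mul, norm_mul, hexp, mul_one, Complex.norm_real, Complex.norm_real,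
    Real.norm_eq_abs, Real.norm_eq_abs]
  have hM0 : 0 ≤ M := (abs_nonneg _).trans (hM 0 ⟨le_rfl, zero_le_one⟩)
  exact mul_le_mul (hM x (Set.Ico_subset_Icc_self hx)) (by gcongr) (by positivity) hM0

theorem hasSum_integral_integral_mul_kernel_mul (hc : Summable c)
    (hH : ∀ t : ℝ, HasSum (fun n : ℤ => (c n : ℂ) * Complex.exp (2 * π * I * n * t)) (H t))
    (hq : Continuous q) :
    HasSum (fun n => c n * ‖FC q (2 * π * n)‖ ^ 2)
      (∫ x in Set.Ico (0 : ℝ) 1, ∫ y in Set.Ico (0 : ℝ) 1, q x * H (x - y) * q y) := by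
  obtain ⟨M, hM⟩ := (isCompact_Icc (a := (0 : ℝ)) (b := 1)).exists_bound_of_continuousOn
    hq.continuousOn
  have hsum := hasSum_integral_mul_integral_kernel_mul hc hH hq (M := M) (by simpa using hM)
  have hcast :
      ∫ x in Set.Ico (0 : ℝ) 1, (q x : ℂ) * ∫ y in Set.Ico (0 : ℝ) 1, (H (x - y) : ℂ) * q y =
      ((∫ x in Set.Ico (0 : ℝ) 1, ∫ y in Set.Ico (0 : ℝ) 1, q x * H (x - y) * q y : ℝ) : ℂ) := by
    rw [← integral_complex_ofReal]
    congr 1 with x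
    rw [← integral_complex_ofReal, ← integral_const_mul]
    congr 1 with y
    push_cast; ring
  rwa [hcast, Complex.hasSum_ofReal] at hsum

end KernelBilinearForm

noncomputable def GcircSqCoeff (κ : ℝ) (n : ℤ) : ℝ :=
  (1 / (2 * κ) * (1 - Real.exp (-κ))⁻¹) ^ 2 *
    (expKernelCoeff (2 * κ) n + if n = 0 then 2 * Real.exp (-κ) else 0)

theorem summable_GcircSqCoeff (κ : ℝ) : Summable (GcircSqCoeff κ) :=
  ((summable_expKernelCoeff _).add (hasSum_ite_eq 0 _).summable).mul_left _

theorem Gcirc_sub_zero (κ x y : ℝ) : Gcirc κ (x - y) 0 = Gcirc κ x y := by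
  rw [Gcirc, Gcirc, sub_zero]

theorem hasSum_Gcirc_sq {κ : ℝ} (hκ : κ ≠ 0) (t : ℝ) :
    HasSum (fun n : ℤ => (GcircSqCoeff κ n : ℂ) * Complex.exp (2 * π * I * n * t))
      ((Gcirc κ t 0 ^ 2 : ℝ) : ℂ) := by
  have hconst : HasSum (fun n : ℤ => ((if n = 0 then 2 * Real.exp (-κ) else 0 : ℝ) : ℂ) *
      Complex.exp (2 * π * I * n * t)) (2 * Real.exp (-κ)) := by
    convert hasSum_single (f := fun n : ℤ => ((if n = 0 then 2 * Real.exp (-κ) else 0 : ℝ) : ℂ) *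
      Complex.exp (2 * π * I * n * t)) 0 fun n hn => by simp [hn] using 1
    simp
  convert ((hasSum_expKernel (mul_ne_zero two_ne_zero hκ) t).add hconst).mul_left
    (((1 / (2 * κ) * (1 - Real.exp (-κ))⁻¹) ^ 2 : ℝ) : ℂ) using 1
  · rfl
  · funext n
    push_cast [GcircSqCoeff]
    ring
  · rw [Gcirc_eq_expKernel, sub_zero, mul_pow, expKernel_sq]
    push_cast
    rfl

theorem eq_of_hasSum_GcircSqCoeff_mul {κ : ℝ} (hκ : κ ≠ 0) {a : ℤ → ℝ} {S : ℝ}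
    (h : HasSum (fun n => GcircSqCoeff κ n * a n) S) :
    S = (2 * Real.exp (-κ) / (1 - Real.exp (-κ)) ^ 2) * (a 0 / (4 * κ ^ 2)) +
      ((1 - Real.exp (-2 * κ)) / (κ * (1 - Real.exp (-κ)) ^ 2)) *
        ∑' n : ℤ, a n / ((2 * π * n) ^ 2 + 4 * κ ^ 2) := by
  have hexp : 1 - Real.exp (-κ) ≠ 0 := sub_ne_zero.mpr fun h => hκ (by simpa using h.symm)
  have hconst : HasSum (fun n : ℤ => (1 / (2 * κ) * (1 - Real.exp (-κ))⁻¹) ^ 2 *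
      (if n = 0 then 2 * Real.exp (-κ) else 0) * a n)
      ((1 / (2 * κ) * (1 - Real.exp (-κ))⁻¹) ^ 2 * (2 * Real.exp (-κ)) * a 0) := by
    convert hasSum_single (f := fun n : ℤ => (1 / (2 * κ) * (1 - Real.exp (-κ))⁻¹) ^ 2 *
      (if n = 0 then 2 * Real.exp (-κ) else 0) * a n) 0 fun n hn => by simp [hn] using 1
    simp
  rw [← sub_eq_iff_eq_add', ← tsum_mul_left]
  convert (h.sub hconst).tsum_eq.symm using 1
  · field_simp
    ring
  · refine tsum_congr fun n => ?_
    have hden : (2 * π * n) ^ 2 + (2 * κ) ^ 2 ≠ 0 := by positivity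
    simp only [GcircSqCoeff, expKernelCoeff, neg_mul]
    field_simp
    ring

theorem hilbert_schmidt_norm_circle_general (κ : ℝ) (hκ : 0 < κ) (q : ℝ → ℝ)
    (hq : ContDiff ℝ (⊤ : ℕ∞) q) :
    ∫ x in Set.Ico (0:ℝ) 1, ∫ y in Set.Ico (0:ℝ) 1, q x * Gcirc κ x y ^ 2 * q y =
      (2 * Real.exp (-κ) / (1 - Real.exp (-κ)) ^ 2) *
          (‖FC q 0‖ ^ 2 / (4 * κ ^ 2)) +
        ((1 - Real.exp (-2 * κ)) / (κ * (1 - Real.exp (-κ)) ^ 2)) *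
          ∑' n : ℤ, ‖FC q (2 * Real.pi * n)‖ ^ 2 /
            ((2 * Real.pi * n) ^ 2 + 4 * κ ^ 2) := by
  have hsum := hasSum_integral_integral_mul_kernel_mul (summable_GcircSqCoeff κ)
    (hasSum_Gcirc_sq hκ.ne') hq.continuous
  simp only [Gcirc_sub_zero] at hsum
  rw [eq_of_hasSum_GcircSqCoeff_mul hκ.ne' hsum]
  simp

theorem hilbert_schmidt_norm_circle (κ : ℝ) (hκ : 0 < κ) (q : ℝ → ℝ)
    (hq : ContDiff ℝ (⊤ : ℕ∞) q) (hper : ∀ x, q (x + 1) = q x) :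
    ∫ x in Set.Ico (0:ℝ) 1, ∫ y in Set.Ico (0:ℝ) 1, q x * Gcirc κ x y ^ 2 * q y =
      (2 * Real.exp (-κ) / (1 - Real.exp (-κ)) ^ 2) *
          (‖FC q 0‖ ^ 2 / (4 * κ ^ 2)) +
        ((1 - Real.exp (-2 * κ)) / (κ * (1 - Real.exp (-κ)) ^ 2)) *
          ∑' n : ℤ, ‖FC q (2 * Real.pi * n)‖ ^ 2 /
            ((2 * Real.pi * n) ^ 2 + 4 * κ ^ 2) :=
  hilbert_schmidt_norm_circle_general κ hκ q hq
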